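/- arXiv:2512.01811 — 2 statements merged into one kernel-verified Lean document; each statement's English description precedes it below -/
import Mathlib

section
/- Let (I,(c_σ)) be a Hermitian fractional ideal over a number field K of degree d. If d̂eg(I,c) ≥ 0, then h⁰(I,c) ≤ 1 + d̂eg(I,c). -/
/-!
For `x ≠ 0` in `I`, AM-GM together with `N(I) ≤ |N_{K/ℚ}(x)|` gives
`∑_σ c_σ² |σ x|² ≥ d τ²` with `τ = exp (-d̂eg / d) ≤ 1`. Hence the image of `I` under
`x ↦ (c_σ σ x)_σ`, whose real span has dimension at most `d`, is `√d τ`-separated and misses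
the ball of radius `√d τ` around `0`. Comparing volumes of disjoint balls, at most
`(3 r / (√d τ))^d` of its points have norm `< r`; integrating this count against `π e^{-π s}`
(layer cake) bounds the Gaussian sum over the nonzero points by
`(3 / (√d τ))^d Γ(d/2 + 1) / π^{d/2} ≤ (e - 1) / τ^d`. The origin adds `1 ≤ τ^{-d}`, so the theta
series is at most `e / τ^d = exp (1 + d̂eg)`.
-/

open scoped NumberField nonZeroDivisors

/-- The theta invariant `h⁰(I, c)` of a Hermitian fractional ideal `(I, (c_σ))` over a number
field `K`:  `h⁰(I, c) = log ∑_{x ∈ I} exp (-π ∑_{σ : K ↪ ℂ} c_σ² |σ x|²)`. -/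
noncomputable def hermitianH0 (K : Type*) [Field K] [NumberField K]
    (I : FractionalIdeal (𝓞 K)⁰ K) (c : (K →+* ℂ) → ℝ) : ℝ :=
  Real.log (∑' x : I,
    Real.exp (-Real.pi * ∑ σ : K →+* ℂ, c σ ^ 2 * ‖σ (x : K)‖ ^ 2))

/-- The arithmetic degree `d̂eg(I, c)` of a Hermitian fractional ideal `(I, (c_σ))` over a number
field `K`:  `d̂eg(I, c) = -log N(I) - ∑_{σ : K ↪ ℂ} log c_σ`, where `N(I)` is the absolute norm
of the fractional ideal `I`. -/
noncomputable def hermitianDeg (K : Type*) [Field K] [NumberField K]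
    (I : FractionalIdeal (𝓞 K)⁰ K) (c : (K →+* ℂ) → ℝ) : ℝ :=
  -Real.log (FractionalIdeal.absNorm I : ℝ) - ∑ σ : K →+* ℂ, Real.log (c σ)

open MeasureTheory Metric Module Set Real Submodule
open scoped Finset ENNReal

theorem Real.add_one_mul_rpow_le_rpow_add_one {κ y : ℝ} (hκ : 1 / 2 ≤ κ) (hy : 1 ≤ y) :
    (y + 1) * (κ * y) ^ y ≤ (κ * (y + 1)) ^ (y + 1) := by
  have hy0 : 0 < y := by linarith
  have hbernoulli : 2 ≤ (1 + 1 / y) ^ y := by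
    have := one_add_mul_self_le_rpow_one_add (s := 1 / y) (by linarith [one_div_pos.mpr hy0]) hy
    rwa [mul_one_div_cancel hy0.ne', one_add_one_eq_two] at this
  have hsplit : (κ * (y + 1)) ^ (y + 1) = κ * (y + 1) * ((κ * y) ^ y * (1 + 1 / y) ^ y) := by
    have hfactor : κ * (y + 1) = κ * y * (1 + 1 / y) := by field_simp
    rw [rpow_add_one (by positivity), hfactor, mul_rpow (by positivity) (by positivity)]
    ring
  calc (y + 1) * (κ * y) ^ y ≤ 2 * κ * ((y + 1) * (κ * y) ^ y) :=
        le_mul_of_one_le_left (by positivity) (by linarith)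
    _ = κ * (y + 1) * ((κ * y) ^ y * 2) := by ring
    _ ≤ _ := by rw [hsplit]; gcongr

theorem Real.Gamma_add_one_add_one_le {y : ℝ} (hy : 1 ≤ y)
    (h : Gamma (y + 1) ≤ (exp 1 - 1) * (2 * π / 9 * y) ^ y) :
    Gamma (y + 1 + 1) ≤ (exp 1 - 1) * (2 * π / 9 * (y + 1)) ^ (y + 1) := by
  rw [Gamma_add_one (by positivity)]
  calc (y + 1) * Gamma (y + 1) ≤ (y + 1) * ((exp 1 - 1) * (2 * π / 9 * y) ^ y) := by gcongr
    _ = (exp 1 - 1) * ((y + 1) * (2 * π / 9 * y) ^ y) := by ring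
    _ ≤ (exp 1 - 1) * (2 * π / 9 * (y + 1)) ^ (y + 1) := by
        gcongr
        · linarith [exp_one_gt_d9]
        · exact add_one_mul_rpow_le_rpow_add_one (by linarith [pi_gt_three]) hy

theorem Real.Gamma_half_add_one_le {n : ℕ} (hn : 1 ≤ n) :
    Gamma (n / 2 + 1) ≤ (exp 1 - 1) * (π * n / 9) ^ ((n : ℝ) / 2) := by
  induction n using Nat.strong_induction_on with
  | _ n ih =>
  have he : 2.7 < exp 1 := lt_trans (by norm_num) exp_one_gt_d9
  match n, hn with
  | 1, _ =>
    have hG : Gamma ((1 : ℕ) / 2 + 1) = √π / 2 := by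
      rw [Nat.cast_one, Gamma_add_one (by norm_num), Gamma_one_half_eq]; ring
    have hR : (π * (1 : ℕ) / 9) ^ (((1 : ℕ) : ℝ) / 2) = √π / 3 := by
      rw [Nat.cast_one, mul_one, ← sqrt_eq_rpow, sqrt_div' _ (by norm_num : (0 : ℝ) ≤ 9),
        show (9 : ℝ) = 3 ^ 2 by norm_num, sqrt_sq (by norm_num)]
    rw [hG, hR]
    nlinarith [sqrt_nonneg π]
  | 2, _ =>
    rw [Nat.cast_ofNat, div_self two_ne_zero, rpow_one, Gamma_add_one one_ne_zero, Gamma_one]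
    nlinarith [pi_gt_three]
  | 3, _ =>
    have hG : Gamma ((3 : ℕ) / 2 + 1) = 3 / 4 * √π := by
      rw [show ((3 : ℕ) : ℝ) / 2 + 1 = 1 / 2 + 1 + 1 by norm_num, Gamma_add_one (by norm_num),
        Gamma_add_one (by norm_num), Gamma_one_half_eq]; ring
    have hsqrt : √π ≤ 2 := by
      rw [show (2 : ℝ) = √(2 ^ 2) by rw [sqrt_sq zero_le_two]]
      exact sqrt_le_sqrt (by nlinarith [pi_lt_four])
    have hR : π * (3 : ℕ) / 9 ≤ (π * (3 : ℕ) / 9) ^ (((3 : ℕ) : ℝ) / 2) := by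
      refine self_le_rpow_of_one_le ?_ (by norm_num)
      push_cast; linarith [pi_gt_three]
    rw [hG]
    push_cast at hR ⊢
    nlinarith [pi_gt_d2]
  | n + 4, _ =>
    have h2 : ((n + 4 : ℕ) : ℝ) / 2 = ((n + 2 : ℕ) : ℝ) / 2 + 1 := by push_cast; ring
    have hstep := Gamma_add_one_add_one_le (y := ((n + 2 : ℕ) : ℝ) / 2)
      (by push_cast; linarith [(n.cast_nonneg : (0 : ℝ) ≤ n)])
      (by convert ih (n + 2) (by omega) (by omega) using 3; ring)
    rw [h2]
    convert hstep using 3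
    rw [← h2]; ring

theorem Finset.card_le_of_pairwise_le_dist {V : Type*} [NormedAddCommGroup V] [NormedSpace ℝ V]
    [FiniteDimensional ℝ V] (s : Finset V) {ε r : ℝ} (hε : 0 < ε) (hr : 0 ≤ r)
    (hsep : (s : Set V).Pairwise fun p q => ε ≤ dist p q) (hs : ∀ p ∈ s, ‖p‖ ≤ r) :
    (#s : ℝ) ≤ ((2 * r + ε) / ε) ^ finrank ℝ V := by
  borelize V
  let μ : Measure V := Measure.addHaar
  have hdisj : (s : Set V).PairwiseDisjoint fun p => ball p (ε / 2) := fun p hp q hq hpq =>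
    ball_disjoint_ball (by linarith [hsep hp hq hpq])
  have hsub : ⋃ p ∈ s, ball p (ε / 2) ⊆ ball 0 (r + ε / 2) := by
    simp only [iUnion_subset_iff]
    intro p hp x hx
    rw [mem_ball_zero_iff]
    calc ‖x‖ ≤ ‖p‖ + dist x p := by
          rw [dist_eq_norm]; linarith [norm_sub_norm_le x p]
      _ < r + ε / 2 := add_lt_add_of_le_of_lt (hs p hp) (mem_ball.mp hx)
  have hvol : (#s : ℝ≥0∞) * μ (ball 0 (ε / 2)) ≤ μ (ball 0 (r + ε / 2)) :=
    calc (#s : ℝ≥0∞) * μ (ball 0 (ε / 2)) = ∑ p ∈ s, μ (ball p (ε / 2)) := by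
          simp only [Measure.addHaar_ball_center μ, sum_const, nsmul_eq_mul]
      _ = μ (⋃ p ∈ s, ball p (ε / 2)) :=
          (measure_biUnion_finset hdisj fun p _ => measurableSet_ball).symm
      _ ≤ μ (ball 0 (r + ε / 2)) := measure_mono hsub
  rw [Measure.addHaar_ball_of_pos μ 0 (half_pos hε),
    Measure.addHaar_ball_of_pos μ 0 (r := r + ε / 2) (by positivity), ← mul_assoc,
    ENNReal.mul_le_mul_iff_left (measure_ball_pos μ 0 one_pos).ne' measure_ball_lt_top.ne,
    ← ENNReal.ofReal_natCast, ← ENNReal.ofReal_mul (by positivity),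
    ENNReal.ofReal_le_ofReal_iff (by positivity)] at hvol
  rw [show (2 * r + ε) / ε = (r + ε / 2) / (ε / 2) by field_simp, div_pow,
    le_div_iff₀ (by positivity)]
  exact hvol

theorem Real.exp_neg_pi_mul_eq_integral_indicator {b : ℝ} (hb : 0 ≤ b) :
    exp (-π * b) = ∫ s in Ioi 0, (Ioi b).indicator (fun s => π * exp (-π * s)) s := by
  rw [integral_indicator measurableSet_Ioi, Measure.restrict_restrict measurableSet_Ioi,
    inter_eq_self_of_subset_left (Ioi_subset_Ioi hb), integral_const_mul,
    integral_exp_mul_Ioi (neg_lt_zero.mpr pi_pos)]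
  field_simp

theorem Real.integral_rpow_mul_exp_neg_pi_mul_Ioi {y : ℝ} (hy : -1 < y) :
    ∫ s in Ioi 0, s ^ y * exp (-π * s) = Gamma (y + 1) / π ^ (y + 1) := by
  have := integral_rpow_mul_exp_neg_mul_Ioi (a := y + 1) (by linarith) pi_pos
  rw [add_sub_cancel_right] at this
  simp_rw [neg_mul, this, one_div, inv_rpow pi_pos.le, inv_mul_eq_div]

section Separated

variable {V : Type*} [NormedAddCommGroup V] [NormedSpace ℝ V] [FiniteDimensional ℝ V]
  {F : Finset V} {ε : ℝ} {d : ℕ}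

theorem Finset.card_filter_norm_lt_le (hε : 0 < ε) (hd : finrank ℝ V ≤ d)
    (hsep : (F : Set V).Pairwise fun p q => ε ≤ dist p q) (hF : ∀ p ∈ F, ε ≤ ‖p‖)
    {r : ℝ} (hr : 0 ≤ r) :
    (#{p ∈ F | ‖p‖ < r} : ℝ) ≤ (3 * r / ε) ^ d := by
  rcases le_or_gt r ε with hrε | hεr
  · have hempty : {p ∈ F | ‖p‖ < r} = ∅ :=
      Finset.filter_eq_empty_iff.mpr fun p hp hlt => by linarith [hF p hp]
    rw [hempty, Finset.card_empty, Nat.cast_zero]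
    positivity
  · have hbase : 1 ≤ 3 * r / ε := by rw [le_div_iff₀ hε]; linarith
    calc (#{p ∈ F | ‖p‖ < r} : ℝ)
        ≤ ((2 * r + ε) / ε) ^ finrank ℝ V :=
          card_le_of_pairwise_le_dist _ hε hr (hsep.mono (Finset.filter_subset _ F))
            fun p hp => (Finset.mem_filter.mp hp).2.le
      _ ≤ (3 * r / ε) ^ finrank ℝ V := by gcongr; linarith
      _ ≤ (3 * r / ε) ^ d := pow_le_pow_right₀ hbase hd

theorem sum_exp_neg_pi_mul_norm_sq_le_Gamma (hε : 0 < ε) (hd : finrank ℝ V ≤ d)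
    (hsep : (F : Set V).Pairwise fun p q => ε ≤ dist p q) (hF : ∀ p ∈ F, ε ≤ ‖p‖) :
    ∑ p ∈ F, exp (-π * ‖p‖ ^ 2) ≤ (3 / ε) ^ d * Gamma (d / 2 + 1) / π ^ ((d : ℝ) / 2) := by
  set g : ℝ → ℝ := fun s => π * exp (-π * s)
  have hg : ∀ b, IntegrableOn g (Ioi b) := fun b =>
    Integrable.const_mul (integrableOn_exp_mul_Ioi (neg_lt_zero.mpr pi_pos) b) π
  have hcount : ∀ s ∈ Ioi (0 : ℝ), ∑ p ∈ F, (Ioi (‖p‖ ^ 2)).indicator g s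
      ≤ (3 / ε) ^ d * π * (s ^ ((d : ℝ) / 2) * exp (-π * s)) := by
    intro s hs
    have hfilter : ∑ p ∈ F, (Ioi (‖p‖ ^ 2)).indicator g s = #{p ∈ F | ‖p‖ < √s} * g s := by
      simp_rw [indicator_apply, mem_Ioi, ← lt_sqrt (norm_nonneg _)]
      rw [← Finset.sum_filter, Finset.sum_const, nsmul_eq_mul]
    have hsqrt : √s ^ d = s ^ ((d : ℝ) / 2) := by
      rw [sqrt_eq_rpow, ← rpow_natCast, ← rpow_mul (le_of_lt hs)]; ring_nf
    rw [hfilter]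
    calc (#{p ∈ F | ‖p‖ < √s} : ℝ) * g s ≤ (3 * √s / ε) ^ d * g s :=
          mul_le_mul_of_nonneg_right (F.card_filter_norm_lt_le hε hd hsep hF (sqrt_nonneg s))
            (by positivity)
      _ = _ := by rw [mul_div_right_comm, mul_pow, hsqrt]; ring
  have hd2 : -1 < (d : ℝ) / 2 := by linarith [show (0 : ℝ) ≤ d / 2 by positivity]
  have hmajorant : IntegrableOn (fun s => s ^ ((d : ℝ) / 2) * exp (-π * s)) (Ioi 0) := by
    simpa using integrableOn_rpow_mul_exp_neg_mul_rpow (p := 1) hd2 one_pos pi_pos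
  calc ∑ p ∈ F, exp (-π * ‖p‖ ^ 2)
      = ∫ s in Ioi 0, ∑ p ∈ F, (Ioi (‖p‖ ^ 2)).indicator g s := by
        rw [integral_finsetSum _ fun p _ => (hg _).indicator measurableSet_Ioi]
        exact Finset.sum_congr rfl fun p _ => exp_neg_pi_mul_eq_integral_indicator (by positivity)
    _ ≤ ∫ s in Ioi 0, (3 / ε) ^ d * π * (s ^ ((d : ℝ) / 2) * exp (-π * s)) :=
        setIntegral_mono_on (integrable_finsetSum _ fun p _ => (hg _).indicator measurableSet_Ioi)
          (hmajorant.const_mul _) measurableSet_Ioi hcount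
    _ = (3 / ε) ^ d * Gamma (d / 2 + 1) / π ^ ((d : ℝ) / 2) := by
        rw [integral_const_mul, integral_rpow_mul_exp_neg_pi_mul_Ioi hd2,
          rpow_add_one pi_pos.ne']
        field_simp

theorem sum_exp_neg_pi_mul_norm_sq_le_div_pow {τ : ℝ} (hτ : 0 < τ) (hd1 : 1 ≤ d)
    (hd : finrank ℝ V ≤ d) (hsep : (F : Set V).Pairwise fun p q => √d * τ ≤ dist p q)
    (hF : ∀ p ∈ F, √d * τ ≤ ‖p‖) :
    ∑ p ∈ F, exp (-π * ‖p‖ ^ 2) ≤ (exp 1 - 1) / τ ^ d := by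
  have hpow : (π * d / 9) ^ ((d : ℝ) / 2) = π ^ ((d : ℝ) / 2) * (√d / 3) ^ d := by
    have h9 : π * d / 9 = π * (√d / 3) ^ 2 := by rw [div_pow, sq_sqrt d.cast_nonneg]; ring
    rw [h9, mul_rpow pi_pos.le (by positivity), ← rpow_natCast_mul (by positivity),
      Nat.cast_ofNat, mul_div_cancel₀ _ two_ne_zero, rpow_natCast]
  calc ∑ p ∈ F, exp (-π * ‖p‖ ^ 2)
      ≤ (3 / (√d * τ)) ^ d * Gamma (d / 2 + 1) / π ^ ((d : ℝ) / 2) :=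
        sum_exp_neg_pi_mul_norm_sq_le_Gamma (by positivity) hd hsep hF
    _ ≤ (3 / (√d * τ)) ^ d * ((exp 1 - 1) * (π * d / 9) ^ ((d : ℝ) / 2))
          / π ^ ((d : ℝ) / 2) := by
        gcongr
        exact Gamma_half_add_one_le hd1
    _ = (exp 1 - 1) * (3 / (√d * τ) * (√d / 3)) ^ d := by
        rw [hpow, mul_pow]
        field_simp
    _ = (exp 1 - 1) / τ ^ d := by
        rw [show 3 / (√d * τ) * (√d / 3) = 1 / τ by field_simp, one_div_pow, mul_one_div]

theorem AddMonoidHom.summable_and_tsum_exp_neg_pi_mul_norm_sq_le {G : Type*} [AddCommGroup G]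
    (g : G →+ V) {τ : ℝ} (hτ0 : 0 < τ) (hτ1 : τ ≤ 1) (hd1 : 1 ≤ d) (hd : finrank ℝ V ≤ d)
    (hg : ∀ x ≠ 0, √d * τ ≤ ‖g x‖) :
    Summable (fun x => exp (-π * ‖g x‖ ^ 2)) ∧ ∑' x, exp (-π * ‖g x‖ ^ 2) ≤ exp 1 / τ ^ d := by
  classical
  have hpos : 0 < √d * τ := mul_pos (sqrt_pos.mpr (by exact_mod_cast hd1)) hτ0
  have hinj : Function.Injective g := (injective_iff_map_eq_zero g).mpr fun x hx => by
    by_contra hx0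
    linarith [hg x hx0, hx ▸ norm_zero (E := V)]
  have hsep : ∀ x y, g x ≠ g y → √d * τ ≤ dist (g x) (g y) := fun x y hxy => by
    rw [dist_eq_norm, ← map_sub]
    exact hg _ (sub_ne_zero.mpr fun h => hxy (h ▸ rfl))
  have hfinite : ∀ s : Finset G, ∑ x ∈ s, exp (-π * ‖g x‖ ^ 2) ≤ exp 1 / τ ^ d := by
    intro s
    have hτd : 1 ≤ 1 / τ ^ d := one_le_one_div (by positivity) (pow_le_one₀ hτ0.le hτ1)
    calc ∑ x ∈ s, exp (-π * ‖g x‖ ^ 2) ≤ ∑ x ∈ insert 0 s, exp (-π * ‖g x‖ ^ 2) :=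
          Finset.sum_le_sum_of_subset_of_nonneg (Finset.subset_insert _ _)
            fun _ _ _ => (exp_pos _).le
      _ = 1 + ∑ p ∈ (s.erase 0).image g, exp (-π * ‖p‖ ^ 2) := by
          rw [← Finset.add_sum_erase _ _ (Finset.mem_insert_self 0 s),
            Finset.erase_insert_eq_erase, Finset.sum_image hinj.injOn]
          simp
      _ ≤ 1 + (exp 1 - 1) / τ ^ d := by
          gcongr
          refine sum_exp_neg_pi_mul_norm_sq_le_div_pow hτ0 hd1 hd ?_ ?_
          · rintro _ hp _ hq hpq
            obtain ⟨x, -, rfl⟩ := Finset.mem_image.mp hp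
            obtain ⟨y, -, rfl⟩ := Finset.mem_image.mp hq
            exact hsep x y hpq
          · intro p hp
            obtain ⟨x, hx, rfl⟩ := Finset.mem_image.mp hp
            exact hg x (Finset.ne_of_mem_erase hx)
      _ ≤ 1 / τ ^ d + (exp 1 - 1) / τ ^ d := by gcongr
      _ = exp 1 / τ ^ d := by ring
  have hsum := summable_of_sum_le (fun x => (exp_pos _).le) hfinite
  exact ⟨hsum, hsum.tsum_le_of_sum_le hfinite⟩

end Separated

theorem Submodule.span_range_eq_span_range_comp_basis {R S M E ι : Type*} [Semiring R]
    [Semiring S] [SMul R S] [AddCommMonoid M] [Module R M] [AddCommMonoid E] [Module R E]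
    [Module S E] [IsScalarTower R S E] (f : M →ₗ[R] E) (b : Basis ι R M) :
    span S (range f) = span S (range (f ∘ b)) := by
  rw [← span_span_of_tower R S (range (f ∘ b)), range_comp, span_image, b.span_eq, map_top,
    LinearMap.coe_range]

section

variable {R S M E : Type*} [Field R] [Field S] [Algebra R S] [AddCommGroup M] [Module R M]
  [FiniteDimensional R M] [AddCommGroup E] [Module R E] [Module S E] [IsScalarTower R S E]
  (f : M →ₗ[R] E)

theorem LinearMap.finiteDimensional_span_range : FiniteDimensional S (span S (Set.range f)) := by
  rw [span_range_eq_span_range_comp_basis f (finBasis R M)]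
  exact FiniteDimensional.span_of_finite S (finite_range _)

theorem LinearMap.finrank_span_range_le : finrank S (span S (Set.range f)) ≤ finrank R M := by
  rw [span_range_eq_span_range_comp_basis f (finBasis R M)]
  exact (finrank_range_le_card _).trans_eq (Fintype.card_fin _)

end

namespace FractionalIdeal

theorem absNorm_le_absNorm_of_le {R K : Type*} [CommRing R] [IsDedekindDomain R]
    [Module.Free ℤ R] [Module.Finite ℤ R] [Field K] [Algebra R K] [IsFractionRing R K]
    {I J : FractionalIdeal R⁰ K} (hJ : J ≠ 0) (hJI : J ≤ I) : absNorm I ≤ absNorm J := by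
  have hI : I ≠ 0 := by rintro rfl; exact hJ (le_bot_iff.mp hJI)
  obtain ⟨J₀, hJ₀⟩ := le_one_iff_exists_coeIdeal.mp
    ((mul_le_mul_left hJI I⁻¹).trans (mul_inv_cancel₀ hI).le)
  have hJ_eq : J = J₀ * I := by rw [hJ₀, mul_assoc, inv_mul_cancel₀ hI, mul_one]
  have hJ₀_ne : Ideal.absNorm J₀ ≠ 0 := fun h => hJ <| absNorm_eq_zero_iff.mp <| by
    rw [hJ_eq, map_mul, coeIdeal_absNorm, h, Nat.cast_zero, zero_mul]
  rw [hJ_eq, map_mul, coeIdeal_absNorm]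
  exact le_mul_of_one_le_left (absNorm_nonneg I)
    (by exact_mod_cast Nat.one_le_iff_ne_zero.mpr hJ₀_ne)

theorem absNorm_le_abs_norm_of_mem {K : Type*} [Field K] [NumberField K]
    {I : FractionalIdeal (𝓞 K)⁰ K} {z : K} (hz : z ∈ I) (hz0 : z ≠ 0) :
    absNorm I ≤ |Algebra.norm ℚ z| := by
  rw [← absNorm_span_singleton (𝓞 K)]
  exact absNorm_le_absNorm_of_le (spanSingleton_ne_zero_iff.mpr hz0)
    (spanSingleton_le_iff_mem.mpr hz)

end FractionalIdeal

namespace NumberField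

variable {K : Type*} [Field K] [NumberField K]

theorem prod_norm_embeddings_eq_abs_norm (z : K) :
    ∏ σ : K →+* ℂ, ‖σ z‖ = |(Algebra.norm ℚ z : ℝ)| := by
  rw [Fintype.prod_equiv (RingHom.equivRatAlgHom K ℂ) (fun σ => ‖σ z‖) (fun φ => ‖φ z‖)
    fun _ => by simp [RingHom.equivRatAlgHom_apply], ← norm_prod,
    ← Algebra.norm_eq_prod_embeddings, eq_ratCast, Complex.norm_ratCast]

noncomputable def weightedEmbedding (c : (K →+* ℂ) → ℝ) : K →ₗ[ℚ] EuclideanSpace ℂ (K →+* ℂ) :=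
  AddMonoidHom.toRatLinearMap
    { toFun := fun x => WithLp.toLp 2 fun σ => (c σ : ℂ) * σ x
      map_zero' := by ext; simp
      map_add' := fun x y => by ext; simp [mul_add] }

theorem norm_weightedEmbedding_sq (c : (K →+* ℂ) → ℝ) (x : K) :
    ‖weightedEmbedding c x‖ ^ 2 = ∑ σ, c σ ^ 2 * ‖σ x‖ ^ 2 := by
  simp [weightedEmbedding, EuclideanSpace.norm_sq_eq, mul_pow]

end NumberField

section HermitianIdeal

variable {K : Type*} [Field K] [NumberField K] {I : FractionalIdeal (𝓞 K)⁰ K}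
  {c : (K →+* ℂ) → ℝ}

theorem exp_neg_hermitianDeg (hI : I ≠ 0) (hc : ∀ σ, 0 < c σ) :
    exp (-hermitianDeg K I c) = FractionalIdeal.absNorm I * ∏ σ, c σ := by
  have hN : (0 : ℝ) < FractionalIdeal.absNorm I := by
    exact_mod_cast (FractionalIdeal.absNorm_nonneg I).lt_of_ne'
      (FractionalIdeal.absNorm_eq_zero_iff.not.mpr hI)
  rw [hermitianDeg, neg_sub, sub_neg_eq_add, exp_add, exp_log hN,
    exp_sum, Finset.prod_congr rfl fun σ _ => exp_log (hc σ), mul_comm]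

theorem finrank_mul_exp_neg_hermitianDeg_div_sq_le (hc : ∀ σ, 0 < c σ) {z : K} (hz : z ∈ I)
    (hz0 : z ≠ 0) :
    (finrank ℚ K : ℝ) * exp (-hermitianDeg K I c / finrank ℚ K) ^ 2
      ≤ ∑ σ : K →+* ℂ, c σ ^ 2 * ‖σ z‖ ^ 2 := by
  set n := finrank ℚ K
  have hn : (0 : ℝ) < n := by exact_mod_cast finrank_pos
  have hcard : (Finset.univ : Finset (K →+* ℂ)).card = n := NumberField.Embeddings.card K ℂ
  have hI : I ≠ 0 := fun h => hz0 (by simpa [h] using hz)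
  have hprod : exp (-hermitianDeg K I c) ^ 2 ≤ ∏ σ : K →+* ℂ, c σ ^ 2 * ‖σ z‖ ^ 2 := by
    rw [Finset.prod_mul_distrib, Finset.prod_pow, Finset.prod_pow, ← mul_pow,
      NumberField.prod_norm_embeddings_eq_abs_norm]
    refine pow_le_pow_left₀ (exp_pos _).le ?_ 2
    rw [exp_neg_hermitianDeg hI hc, mul_comm]
    gcongr
    · exact Finset.prod_nonneg fun σ _ => (hc σ).le
    · exact_mod_cast FractionalIdeal.absNorm_le_abs_norm_of_mem hz hz0
  have hamgm := geom_mean_le_arith_mean Finset.univ (fun _ => 1)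
    (fun σ => c σ ^ 2 * ‖σ z‖ ^ 2) (fun _ _ => zero_le_one) (by simp [hcard, hn])
    (fun _ _ => by positivity)
  simp only [rpow_one, one_mul, Finset.sum_const, hcard, nsmul_eq_mul, mul_one] at hamgm
  rw [← le_div_iff₀' hn]
  refine le_trans ?_ hamgm
  calc exp (-hermitianDeg K I c / n) ^ 2 = (exp (-hermitianDeg K I c) ^ 2) ^ (n : ℝ)⁻¹ := by
        rw [← exp_nat_mul, ← exp_nat_mul, ← exp_mul]; ring_nf
    _ ≤ _ := by gcongr

theorem sqrt_finrank_mul_exp_neg_hermitianDeg_div_le_norm (hc : ∀ σ, 0 < c σ) {z : K}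
    (hz : z ∈ I) (hz0 : z ≠ 0) :
    √(finrank ℚ K) * exp (-hermitianDeg K I c / finrank ℚ K)
      ≤ ‖NumberField.weightedEmbedding c z‖ := by
  refine (pow_le_pow_iff_left₀ (by positivity) (norm_nonneg _) two_ne_zero).mp ?_
  rw [mul_pow, sq_sqrt (Nat.cast_nonneg _), NumberField.norm_weightedEmbedding_sq]
  exact finrank_mul_exp_neg_hermitianDeg_div_sq_le hc hz hz0

end HermitianIdeal

theorem hermitianH0_le_of_deg_nonneg_general
    (K : Type*) [Field K] [NumberField K]
    (I : FractionalIdeal (𝓞 K)⁰ K)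
    (c : (K →+* ℂ) → ℝ) (hc : ∀ σ, 0 < c σ)
    (hdeg : 0 ≤ hermitianDeg K I c) :
    hermitianH0 K I c ≤ 1 + hermitianDeg K I c := by
  set n := finrank ℚ K
  set τ := exp (-hermitianDeg K I c / n)
  have hn : 1 ≤ n := finrank_pos
  have hτ1 : τ ≤ 1 := exp_le_one_iff.mpr
    (div_nonpos_of_nonpos_of_nonneg (neg_nonpos.mpr hdeg) n.cast_nonneg)
  have hτn : τ ^ n = exp (-hermitianDeg K I c) := by
    rw [← exp_nat_mul, mul_div_cancel₀ _ (by positivity)]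
  let v := NumberField.weightedEmbedding c
  have := v.finiteDimensional_span_range (S := ℝ)
  let g : I →+ span ℝ (range v) := AddMonoidHom.codRestrict
    (v.toAddMonoidHom.comp (I : Submodule (𝓞 K) K).subtype.toAddMonoidHom) _
    fun x => subset_span (mem_range_self _)
  have hmin : ∀ x ≠ 0, √n * τ ≤ ‖g x‖ := fun x hx =>
    sqrt_finrank_mul_exp_neg_hermitianDeg_div_le_norm hc x.2 (by simpa using hx)
  obtain ⟨hsum, hle⟩ := g.summable_and_tsum_exp_neg_pi_mul_norm_sq_le (exp_pos _) hτ1 hn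
    v.finrank_span_range_le hmin
  have hnorm : ∀ x : I, ∑ σ : K →+* ℂ, c σ ^ 2 * ‖σ x‖ ^ 2 = ‖g x‖ ^ 2 :=
    fun x => (NumberField.norm_weightedEmbedding_sq c x).symm
  rw [hermitianH0]
  simp_rw [hnorm]
  refine (log_le_iff_le_exp (hsum.tsum_pos (fun _ => (exp_pos _).le) 0 (exp_pos _))).mpr
    (hle.trans_eq ?_)
  rw [hτn, exp_add, exp_neg, div_inv_eq_mul]

/-- **Bost's upper bound for `h⁰` of a Hermitian fractional ideal of nonnegative degree.**
Let `(I, (c_σ))` be a Hermitian fractional ideal over a number field `K` of degree `d`.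
If `d̂eg(I, c) ≥ 0`, then `h⁰(I, c) ≤ 1 + d̂eg(I, c)`. -/
theorem hermitianH0_le_of_deg_nonneg
    (K : Type*) [Field K] [NumberField K]
    (d : ℕ) (hd : d = Module.finrank ℚ K)
    (I : FractionalIdeal (𝓞 K)⁰ K) (hI : I ≠ 0)
    (c : (K →+* ℂ) → ℝ) (hc : ∀ σ, 0 < c σ)
    (hconj : ∀ σ : K →+* ℂ, c ((starRingEnd ℂ).comp σ) = c σ)
    (hdeg : 0 ≤ hermitianDeg K I c) :
    hermitianH0 K I c ≤ 1 + hermitianDeg K I c :=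
  hermitianH0_le_of_deg_nonneg_general K I c hc hdeg
end

section
/- Let K be a number field of degree d over ℚ with discriminant D_K, let I be a nonzero fractional ideal of K, and for each field embedding σ : K ↪ ℂ let c_σ be a positive real number with c_{σ̄} = c_σ. Equip the real vector space K ⊗_ℚ ℝ with the symmetric bilinear form determined by ⟨x,y⟩ := ∑_{σ:K↪ℂ} c_σ² · σ(x) · conj(σ(y)) for x,y ∈ K (which is real-valued and positive definite). Then I is a full-rank ℤ-lattice of rank d in K ⊗_ℚ ℝ and covol(I) = N(I) · (∏_{σ:K↪ℂ} c_σ) · √|D_K|; equivalently, −log covol(I) = d̂eg(I,c) − (1/2)·log|D_K|, where d̂eg(I,c) := −log N(I) − ∑_{σ:K↪ℂ} log c_σ and N(I) is the absolute norm of I. -/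
/-!
Pick a `ℚ`-basis `β` of `K` that is a `ℤ`-basis of `I`; its image under `ι` is an `ℝ`-basis of
`E` spanning the lattice, so `covol(I)² = det Gram(ι ∘ β)`. The hypothesis on the inner product
factors the complexified Gram matrix as `N · diag(c_σ²) · Nᴴ` with `N = (σ(β_i))`, and
`det N² = disc(β) = N(I)² · D_K`.
-/

open MeasureTheory Module Matrix
open scoped NumberField nonZeroDivisors

theorem ZLattice.covolume_span_eq_sqrt_det_gram {E ι : Type*} [NormedAddCommGroup E]
    [InnerProductSpace ℝ E] [FiniteDimensional ℝ E] [MeasurableSpace E] [BorelSpace E]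
    [Fintype ι] [DecidableEq ι] (b : Basis ι ℝ E) :
    ZLattice.covolume (Submodule.span ℤ (Set.range b)) volume = √(gram ℝ b).det := by
  let b₀ : OrthonormalBasis ι ℝ E := (stdOrthonormalBasis ℝ E).reindex
    (Fintype.equivOfCardEq (by rw [Fintype.card_fin, finrank_eq_card_basis b]))
  have hcov : ZLattice.covolume (Submodule.span ℤ (Set.range b)) volume = |b₀.toBasis.det b| := by
    rw [ZLattice.covolume_eq_measure_fundamentalDomain _ _ (ZSpan.isAddFundamentalDomain b volume),
      ZSpan.measureReal_fundamentalDomain b volume b₀.toBasis, measureReal_def,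
      measure_congr (ZSpan.fundamentalDomain_ae_parallelepiped b₀.toBasis volume),
      b₀.coe_toBasis, b₀.volume_parallelepiped, ENNReal.toReal_one, mul_one]
  have hgram : gram ℝ b = (b₀.toBasis.toMatrix b)ᵀ * b₀.toBasis.toMatrix b := by
    rw [gram_eq_conjTranspose_mul b₀, conjTranspose_eq_transpose_of_trivial]
    rfl
  rw [hcov, hgram, det_mul, det_transpose, ← Basis.det_apply, ← sq, Real.sqrt_sq_eq_abs]

theorem Matrix.det_eq_prod_mul_norm_det_sq_of_map_ofReal_eq {n : Type*} [Fintype n]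
    [DecidableEq n] {G : Matrix n n ℝ} {N : Matrix n n ℂ} {w : n → ℝ}
    (h : G.map ((↑) : ℝ → ℂ) = N * diagonal (fun i ↦ (w i : ℂ)) * Nᴴ) :
    G.det = (∏ i, w i) * ‖N.det‖ ^ 2 := by
  apply Complex.ofReal_injective
  have hdet : (G.det : ℂ) = (G.map ((↑) : ℝ → ℂ)).det := Complex.ofRealHom.map_det G
  rw [hdet, h, det_mul, det_mul, det_diagonal, det_conjTranspose, mul_right_comm,
    ← starRingEnd_apply, Complex.mul_conj']
  push_cast
  ring

theorem AddMonoidHom.exists_basis_coe_eq_comp {V E κ : Type*} [AddCommGroup V] [Module ℚ V]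
    [AddCommGroup E] [Module ℝ E] [Fintype κ] (f : V →+ E) (b : Basis κ ℚ V)
    (hspan : Submodule.span ℝ (Set.range f) = ⊤) (hrank : finrank ℝ E = finrank ℚ V) :
    ∃ bE : Basis κ ℝ E, ⇑bE = f ∘ b := by
  have hle : ⊤ ≤ Submodule.span ℝ (Set.range (f ∘ b)) := by
    rw [← hspan, Submodule.span_le]
    rintro _ ⟨y, rfl⟩
    have hy : f y = ∑ i, (b.repr y i : ℝ) • f (b i) := by
      conv_lhs => rw [← b.sum_repr y, map_sum]
      -- an additive map between `ℚ`-vector spaces is automatically `ℚ`-linear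
      exact Finset.sum_congr rfl fun i _ ↦ by
        simpa using map_ratCast_smul f ℚ ℝ (b.repr y i) (b i)
    rw [hy]
    exact Submodule.sum_mem _ fun i _ ↦
      Submodule.smul_mem _ _ (Submodule.subset_span ⟨i, rfl⟩)
  exact ⟨basisOfTopLeSpanOfCardEqFinrank _ hle (by rw [hrank, finrank_eq_card_basis b]),
    coe_basisOfTopLeSpanOfCardEqFinrank _ _ _⟩

theorem AddMonoidHom.span_int_image_span_int {V E : Type*} [AddCommGroup V] [AddCommGroup E]
    (f : V →+ E) (s : Set V) :
    Submodule.span ℤ (f '' Submodule.span ℤ s) = Submodule.span ℤ (f '' s) := by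
  change Submodule.span ℤ (f.toIntLinearMap '' _) = Submodule.span ℤ (f.toIntLinearMap '' s)
  rw [Submodule.span_image, Submodule.span_image, Submodule.span_eq]

namespace NumberField

variable {K : Type*} [Field K] [NumberField K]

theorem discr_basisOfFractionalIdeal (I : (FractionalIdeal (𝓞 K)⁰ K)ˣ) :
    Algebra.discr ℚ (basisOfFractionalIdeal K I) =
      FractionalIdeal.absNorm (I : FractionalIdeal (𝓞 K)⁰ K) ^ 2 * discr K := by
  classical
  let e : Free.ChooseBasisIndex ℤ (𝓞 K) ≃ Free.ChooseBasisIndex ℤ I :=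
    Fintype.equivOfCardEq <| by
      rw [← finrank_eq_card_chooseBasisIndex, ← finrank_eq_card_chooseBasisIndex,
        fractionalIdeal_rank]
  let B := (integralBasis K).reindex e
  let β := basisOfFractionalIdeal K I
  have hβ : ⇑B ᵥ* (B.toMatrix β).map (algebraMap ℚ K) = β := by
    ext j
    conv_rhs => rw [← B.sum_toMatrix_smul_self β j]
    simp only [vecMul, dotProduct, map_apply, Algebra.smul_def]
    exact Finset.sum_congr rfl fun i _ ↦ mul_comm _ _
  have hdet : |(B.toMatrix β).det| = FractionalIdeal.absNorm (I : FractionalIdeal (𝓞 K)⁰ K) := by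
    rw [← Basis.det_apply, Basis.det_reindex, ← det_basisOfFractionalIdeal_eq_absNorm K I e,
      Basis.coe_reindex, Equiv.symm_symm]
  rw [← hβ, Algebra.discr_of_matrix_vecMul, ← sq_abs, hdet, Basis.coe_reindex,
    Algebra.discr_reindex, coe_discr]

section Gram

variable {E : Type*} [NormedAddCommGroup E] [InnerProductSpace ℝ E] {ι : K →+ E}
  {c : (K →+* ℂ) → ℝ}

theorem map_ofReal_gram_comp_eq
    (hinner : ∀ x y : K,
      ((inner ℝ (ι x) (ι y) : ℝ) : ℂ) = ∑ σ : K →+* ℂ, (c σ : ℂ) ^ 2 * σ x * (starRingEnd ℂ) (σ y))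
    {κ : Type*} [Fintype κ] [DecidableEq κ] (β : κ → K) (e : κ ≃ (K →ₐ[ℚ] ℂ)) :
    (gram ℝ (ι ∘ β)).map ((↑) : ℝ → ℂ) =
      Algebra.embeddingsMatrixReindex ℚ ℂ β e * diagonal (fun k ↦ ((c (e k) ^ 2 : ℝ) : ℂ)) *
        (Algebra.embeddingsMatrixReindex ℚ ℂ β e)ᴴ := by
  ext i j
  rw [map_apply, gram_apply, Function.comp_apply, Function.comp_apply, hinner,
    ← (e.trans (RingHom.equivRatAlgHom K ℂ).symm).sum_comp, mul_apply]
  refine Finset.sum_congr rfl fun k _ ↦ ?_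
  simp only [Equiv.trans_apply, RingHom.equivRatAlgHom_symm_apply, AlgHom.toRingHom_eq_coe,
    RingHom.coe_coe, Algebra.embeddingsMatrixReindex, Algebra.embeddingsMatrix, reindex_apply,
    Equiv.refl_symm, Equiv.coe_refl, Equiv.symm_symm, Complex.ofReal_pow, mul_diagonal,
    submatrix_apply, id_eq, of_apply, conjTranspose_apply, RCLike.star_def]
  ring

theorem det_gram_comp_eq_prod_mul_abs_discr
    (hinner : ∀ x y : K,
      ((inner ℝ (ι x) (ι y) : ℝ) : ℂ) = ∑ σ : K →+* ℂ, (c σ : ℂ) ^ 2 * σ x * (starRingEnd ℂ) (σ y))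
    {κ : Type*} [Fintype κ] [DecidableEq κ] (β : Basis κ ℚ K) :
    (gram ℝ (ι ∘ β)).det = (∏ σ, c σ ^ 2) * |(Algebra.discr ℚ β : ℝ)| := by
  let e : κ ≃ (K →ₐ[ℚ] ℂ) := Fintype.equivOfCardEq <| by
    rw [← finrank_eq_card_basis β, AlgHom.card ℚ K ℂ]
  rw [det_eq_prod_mul_norm_det_sq_of_map_ofReal_eq (map_ofReal_gram_comp_eq hinner β e),
    ← (e.trans (RingHom.equivRatAlgHom K ℂ).symm).prod_comp, ← norm_pow,
    ← Algebra.discr_eq_det_embeddingsMatrixReindex_pow_two, eq_ratCast, Complex.norm_ratCast]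
  rfl

end Gram

end NumberField

open NumberField in
theorem covolume_fractionalIdeal_general
    (K : Type*) [Field K] [NumberField K]
    (d : ℕ) (hd : d = Module.finrank ℚ K)
    (I : FractionalIdeal (𝓞 K)⁰ K) (hI : I ≠ 0)
    (c : (K →+* ℂ) → ℝ) (hc : ∀ σ, 0 < c σ)
    (E : Type*) [NormedAddCommGroup E] [InnerProductSpace ℝ E] [FiniteDimensional ℝ E]
    [MeasurableSpace E] [BorelSpace E]
    (ι : K →+ E)
    (hspan : Submodule.span ℝ (Set.range ι) = ⊤)
    (hdim : Module.finrank ℝ E = d)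
    (hinner : ∀ x y : K,
      ((inner ℝ (ι x) (ι y) : ℝ) : ℂ) =
        ∑ σ : K →+* ℂ, (c σ : ℂ) ^ 2 * σ x * (starRingEnd ℂ) (σ y)) :
    DiscreteTopology (Submodule.span ℤ (ι '' (I : Set K))) ∧
      Submodule.span ℝ ((Submodule.span ℤ (ι '' (I : Set K)) : Submodule ℤ E) : Set E) = ⊤ ∧
      Module.finrank ℤ (Submodule.span ℤ (ι '' (I : Set K))) = d ∧
      ZLattice.covolume (Submodule.span ℤ (ι '' (I : Set K))) volume =
        (FractionalIdeal.absNorm I : ℝ) * (∏ σ : K →+* ℂ, c σ) *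
          Real.sqrt |(NumberField.discr K : ℝ)| ∧
      -Real.log (ZLattice.covolume (Submodule.span ℤ (ι '' (I : Set K))) volume) =
        (-Real.log (FractionalIdeal.absNorm I : ℝ) - ∑ σ : K →+* ℂ, Real.log (c σ)) -
          (1 / 2) * Real.log |(NumberField.discr K : ℝ)| := by
  classical
  let β := basisOfFractionalIdeal K (Units.mk0 I hI)
  obtain ⟨bE, hbE⟩ := ι.exists_basis_coe_eq_comp β hspan (by rw [hdim, hd])
  have hL : Submodule.span ℤ (ι '' (I : Set K)) = Submodule.span ℤ (Set.range bE) := by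
    have hI' : (I : Set K) = Submodule.span ℤ (Set.range β) :=
      Set.ext fun x ↦ (mem_span_basisOfFractionalIdeal K (I := Units.mk0 I hI)).symm
    rw [hI', ι.span_int_image_span_int, hbE, Set.range_comp]
  have hN : 0 < (FractionalIdeal.absNorm I : ℝ) := by
    exact_mod_cast (FractionalIdeal.absNorm_nonneg I).lt_of_ne'
      (mt FractionalIdeal.absNorm_eq_zero_iff.mp hI)
  have hcov : ZLattice.covolume (Submodule.span ℤ (ι '' (I : Set K))) volume =
      (FractionalIdeal.absNorm I : ℝ) * (∏ σ, c σ) * √|(discr K : ℝ)| := by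
    rw [hL, ZLattice.covolume_span_eq_sqrt_det_gram, hbE,
      det_gram_comp_eq_prod_mul_abs_discr hinner, discr_basisOfFractionalIdeal]
    have hsq : (∏ σ, c σ ^ 2) * |((FractionalIdeal.absNorm I ^ 2 * discr K : ℚ) : ℝ)| =
        ((FractionalIdeal.absNorm I : ℝ) * ∏ σ, c σ) ^ 2 * |(discr K : ℝ)| := by
      push_cast
      rw [abs_mul, abs_sq, Finset.prod_pow]
      ring
    rw [Units.val_mk0, hsq, Real.sqrt_mul (sq_nonneg _),
      Real.sqrt_sq (mul_nonneg hN.le (Finset.prod_nonneg fun σ _ ↦ (hc σ).le))]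
  refine ⟨hL ▸ inferInstance, hL ▸ ZSpan.span_top bE, ?_, hcov, ?_⟩
  · rw [hL, finrank_eq_card_basis (bE.restrictScalars ℤ), ← finrank_eq_card_basis β, hd]
  · have hD : 0 < |(discr K : ℝ)| := abs_pos.mpr (by exact_mod_cast discr_ne_zero K)
    have hprod : 0 < ∏ σ, c σ := Finset.prod_pos fun σ _ ↦ hc σ
    rw [hcov, Real.log_mul (by positivity) (by positivity), Real.log_mul hN.ne' hprod.ne',
      Real.log_sqrt hD.le, Real.log_prod fun σ _ ↦ (hc σ).ne']
    ring

/-- **Covolume of a Hermitian fractional ideal in `K ⊗_ℚ ℝ`.**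
Let `K` be a number field of degree `d` over `ℚ` with discriminant `D_K`, let `I` be a nonzero
fractional ideal of `K`, and for each embedding `σ : K ↪ ℂ` let `c_σ > 0` with `c_{σ̄} = c_σ`.
Equip `K ⊗_ℚ ℝ` (here: a real inner product space `E` together with an injective `ℚ`-linear map
`ι : K → E` with image spanning `E` over `ℝ` and `dim_ℝ E = d`) with the inner product determined
by `⟪x, y⟫ = ∑_{σ : K ↪ ℂ} c_σ² σ(x) conj(σ(y))`.  Then `I` is a full-rank `ℤ`-lattice of rank
`d` in `K ⊗_ℚ ℝ` and `covol(I) = N(I) ⬝ (∏_σ c_σ) ⬝ √|D_K|`; equivalently,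
`-log covol(I) = d̂eg(I, c) - (1/2) log |D_K|` with
`d̂eg(I, c) = -log N(I) - ∑_σ log c_σ`. -/
theorem covolume_fractionalIdeal
    (K : Type*) [Field K] [NumberField K]
    (d : ℕ) (hd : d = Module.finrank ℚ K)
    (I : FractionalIdeal (𝓞 K)⁰ K) (hI : I ≠ 0)
    (c : (K →+* ℂ) → ℝ) (hc : ∀ σ, 0 < c σ)
    (hconj : ∀ σ : K →+* ℂ, c ((starRingEnd ℂ).comp σ) = c σ)
    (E : Type*) [NormedAddCommGroup E] [InnerProductSpace ℝ E] [FiniteDimensional ℝ E]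
    [MeasurableSpace E] [BorelSpace E]
    (ι : K →+ E) (hlin : ∀ (q : ℚ) (x : K), ι (q • x) = (q : ℝ) • ι x)
    (hinj : Function.Injective ι)
    (hspan : Submodule.span ℝ (Set.range ι) = ⊤)
    (hdim : Module.finrank ℝ E = d)
    (hinner : ∀ x y : K,
      ((inner ℝ (ι x) (ι y) : ℝ) : ℂ) =
        ∑ σ : K →+* ℂ, (c σ : ℂ) ^ 2 * σ x * (starRingEnd ℂ) (σ y)) :
    DiscreteTopology (Submodule.span ℤ (ι '' (I : Set K))) ∧
      Submodule.span ℝ ((Submodule.span ℤ (ι '' (I : Set K)) : Submodule ℤ E) : Set E) = ⊤ ∧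
      Module.finrank ℤ (Submodule.span ℤ (ι '' (I : Set K))) = d ∧
      ZLattice.covolume (Submodule.span ℤ (ι '' (I : Set K))) volume =
        (FractionalIdeal.absNorm I : ℝ) * (∏ σ : K →+* ℂ, c σ) *
          Real.sqrt |(NumberField.discr K : ℝ)| ∧
      -Real.log (ZLattice.covolume (Submodule.span ℤ (ι '' (I : Set K))) volume) =
        (-Real.log (FractionalIdeal.absNorm I : ℝ) - ∑ σ : K →+* ℂ, Real.log (c σ)) -
          (1 / 2) * Real.log |(NumberField.discr K : ℝ)| :=
  covolume_fractionalIdeal_general K d hd I hI c hc E ι hspan hdim hinner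
end
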